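/- Let G and F be locally finite connected graphs with F one-ended, and let ψ be a partial bijection from V(G) to V(F) with dom(ψ) infinite. If the set of ends in the closure of dom(ψ) equals exactly the set of non-free (limit) ends of G, then G ⊕_ψ F has at most one non-free end. -/

import Mathlib

open SimpleGraph

variable {V W U : Type*}

/-- A walk is a *maximal internally isolated path* if it is a path, its endpoints have
degree `≠ 2`, and all internal vertices have degree `2`. -/
def IsMiiPath (G : SimpleGraph V) {u v : V} (p : G.Walk u v) : Prop :=
  p.IsPath ∧ (G.neighborSet u).ncard ≠ 2 ∧ (G.neighborSet v).ncard ≠ 2 ∧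
    ∀ w ∈ p.support, w ≠ u → w ≠ v → (G.neighborSet w).ncard = 2

/-- The mii-spectrum of a graph: lengths of its maximal internally isolated paths. -/
def miiSpectrum (G : SimpleGraph V) : Set ℕ :=
  {k | ∃ (u v : V) (p : G.Walk u v), IsMiiPath G p ∧ p.length = k}

/-- The space of ends of a graph: compatible choices of a component of the complement of
each finite vertex set. -/
def EndSpace (G : SimpleGraph V) : Type _ :=
  {f : ∀ K : Finset V, G.ComponentCompl (K : Set V) //
    ∀ (K L : Finset V) (h : K ⊆ L), (f L).hom (by exact_mod_cast h) = f K}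

instance (G : SimpleGraph V) (K : Set V) : TopologicalSpace (G.ComponentCompl K) := ⊥

instance (G : SimpleGraph V) : TopologicalSpace (EndSpace G) :=
  instTopologicalSpaceSubtype

/-- A graph is one-ended if it has exactly one end. -/
def OneEnded (G : SimpleGraph V) : Prop :=
  ∃ e : EndSpace G, ∀ e' : EndSpace G, e' = e

/-- An end is free if it is determined by its component outside some finite vertex set. -/
def IsFreeEnd {G : SimpleGraph V} (e : EndSpace G) : Prop :=
  ∃ K : Finset V, ∀ e' : EndSpace G, e'.1 K = e.1 K → e' = e

/-- The set of ends lying in the closure of a vertex set `X`. -/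
def endBoundary (G : SimpleGraph V) (X : Set V) : Set (EndSpace G) :=
  {e | ∀ K : Finset V, ((e.1 K).supp ∩ X).Infinite}

/-- The disjoint union of two graphs. -/
def sumGraph (G : SimpleGraph V) (F : SimpleGraph W) : SimpleGraph (V ⊕ W) where
  Adj x y := (∃ a b, x = Sum.inl a ∧ y = Sum.inl b ∧ G.Adj a b) ∨
    (∃ a b, x = Sum.inr a ∧ y = Sum.inr b ∧ F.Adj a b)
  symm := by
    constructor
    rintro x y (⟨a, b, rfl, rfl, h⟩ | ⟨a, b, rfl, rfl, h⟩)
    · exact Or.inl ⟨b, a, rfl, rfl, h.symm⟩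
    · exact Or.inr ⟨b, a, rfl, rfl, h.symm⟩
  loopless := by
    constructor
    rintro x (⟨a, b, rfl, h, hab⟩ | ⟨a, b, rfl, h, hab⟩) <;>
      · cases h; exact hab.ne rfl

open Classical in
/-- The setoid identifying each `v ∈ D` (in the left graph) with `ψ v` (in the right one). -/
noncomputable def glueSetoid (D : Set V) (ψ : V → W) : Setoid (V ⊕ W) :=
  Setoid.ker (Sum.elim (fun v => if v ∈ D then Sum.inr (ψ v) else (Sum.inl v : V ⊕ W)) Sum.inr)

/-- The gluing sum `G ⊕_ψ F` of two graphs along a partial map `ψ` with domain `D`. -/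
noncomputable def gluingSum (G : SimpleGraph V) (F : SimpleGraph W) (D : Set V) (ψ : V → W) :
    SimpleGraph (Quotient (glueSetoid D ψ)) :=
  SimpleGraph.fromRel (fun a b => ∃ x y : V ⊕ W,
    a = Quotient.mk (glueSetoid D ψ) x ∧ b = Quotient.mk (glueSetoid D ψ) y ∧
      (sumGraph G F).Adj x y)

/-- Two graphs are hypomorphic if there is a vertex bijection `φ` such that deleting `v`
and `φ v` always yields isomorphic graphs. -/
def Hypomorphic (G : SimpleGraph V) (H : SimpleGraph W) : Prop :=
  ∃ φ : V ≃ W, ∀ v : V,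
    Nonempty ((G.induce {u | u ≠ v}) ≃g (H.induce {u | u ≠ φ v}))

/-- The quotient setoid collapsing a subset `A` to a single point. -/
def collapseSetoid {X : Type*} (A : Set X) : Setoid X where
  r a b := a = b ∨ (a ∈ A ∧ b ∈ A)
  iseqv := by
    constructor
    · exact fun a => Or.inl rfl
    · rintro a b (rfl | ⟨ha, hb⟩); exacts [Or.inl rfl, Or.inr ⟨hb, ha⟩]
    · rintro a b c (rfl | ⟨ha, hb⟩) (rfl | ⟨hb', hc⟩)
      exacts [Or.inl rfl, Or.inr ⟨hb', hc⟩, Or.inr ⟨ha, hb⟩, Or.inr ⟨ha, hc⟩]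

/-- The one-way infinite path (ray) on `ℕ`. -/
def rayGraph : SimpleGraph ℕ :=
  SimpleGraph.fromRel (fun m n => n = m + 1)

/-- `r : ℕ → V` is a ray in `G`. -/
structure IsRay (G : SimpleGraph V) (r : ℕ → V) : Prop where
  inj : Function.Injective r
  adj : ∀ n, G.Adj (r n) (r (n + 1))

/-- Two rays are equivalent if for every finite vertex set `S` they have tails lying in,
and connected within, the same component of `G - S`. -/
def RayEquiv (G : SimpleGraph V) (r r' : ℕ → V) : Prop :=
  ∀ S : Finset V, ∃ n n' : ℕ,
    (∀ k ≥ n, r k ∉ (S : Set V)) ∧ (∀ k ≥ n', r' k ∉ (S : Set V)) ∧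
    ∃ (h : r n ∈ ((S : Set V))ᶜ) (h' : r' n' ∈ ((S : Set V))ᶜ),
      (G.induce ((S : Set V))ᶜ).Reachable ⟨r n, h⟩ ⟨r' n', h'⟩

/-!
If some component `C(ω, K)` of a limit end `ω` of `G ⊕_ψ F` contained only finitely many
vertices of `F`, then beyond a larger finite set the components of `ω` would avoid `F` altogether,
hence be components of `G` without vertices of `dom ψ`. They describe an end of `G` outside the
closure of `dom ψ`, which is free by hypothesis, and its freeness transfers back to `ω`.
So every component of a limit end contains infinitely many vertices of `F`. Since `F` is locally
finite and one-ended, outside a finite set all but finitely many vertices of `F` lie in one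
component, so any two limit ends share their component outside every finite `K`.
-/

namespace SimpleGraph

variable {G : SimpleGraph V}

lemma Hom.componentComplMk_eq_componentComplMk {H : SimpleGraph U} (φ : G →g H) {K : Set V}
    {L : Set U} (hLK : φ ⁻¹' L ⊆ K) {x y : V} (hx : x ∉ K) (hy : y ∉ K)
    (hxy : G.componentComplMk hx = G.componentComplMk hy) :
    H.componentComplMk (fun h => hx (hLK h)) = H.componentComplMk (fun h => hy (hLK h)) := by
  let φ' : G.induce Kᶜ →g H.induce Lᶜ :=
    ⟨fun v => ⟨φ v, fun h => v.2 (hLK h)⟩, fun h => φ.map_adj h⟩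
  exact ConnectedComponent.eq.mpr ((ConnectedComponent.exact hxy).map φ')

lemma exists_mem_componentCompl_infinite [LocallyFinite G] [Fact G.Preconnected]
    (K : Finset V) {X : Set V} (hX : X.Infinite) :
    ∃ x ∈ X, ∃ hx : x ∉ (K : Set V), (G.componentComplMk hx).supp.Infinite := by
  have hfin : (⋃ (C : G.ComponentCompl K) (_ : C.supp.Finite), C.supp).Finite :=
    Set.finite_iUnion fun C => Set.finite_iUnion fun hC => hC
  obtain ⟨x, hxX, hx⟩ := (hX.sdiff (hfin.union K.finite_toSet)).nonempty
  rw [Set.mem_union, not_or] at hx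
  refine ⟨x, hxX, hx.2, fun hC => hx.1 ?_⟩
  exact Set.mem_iUnion₂.mpr ⟨_, hC, G.componentComplMk_mem hx.2⟩

end SimpleGraph

namespace EndSpace

variable {G : SimpleGraph V}

lemma supp_subset (e : EndSpace G) {K L : Finset V} (h : K ⊆ L) :
    (e.1 L : Set V) ⊆ e.1 K := by
  rw [← e.2 K L h]
  exact (e.1 L).subset_hom _

lemma ext_of_forall_superset {e e' : EndSpace G} (K : Finset V)
    (h : ∀ L, K ⊆ L → e.1 L = e'.1 L) : e = e' := by
  classical
  refine Subtype.ext (funext fun L => ?_)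
  rw [← e.2 L (L ∪ K) Finset.subset_union_left, ← e'.2 L (L ∪ K) Finset.subset_union_left,
    h _ Finset.subset_union_right]

/-- König's lemma, through the Mittag-Leffler property of the inverse system of components. -/
lemma exists_apply_eq [LocallyFinite G] [Fact G.Preconnected] [Infinite V] (K : Finset V)
    (C : G.ComponentCompl (K : Set V)) (hC : C.supp.Infinite) : ∃ e : EndSpace G, e.1 K = C := by
  set Φ := G.componentComplFunctor
  have : ∀ j, Finite (Φ.obj j) := fun j => G.componentCompl_finite j.unop
  have : ∀ j, Nonempty (Φ.obj j) := fun j => G.componentCompl_nonempty_of_infinite j.unop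
  have hΦ : Φ.IsMittagLeffler :=
    Φ.isMittagLeffler_of_exists_finite_range fun j =>
      ⟨j, CategoryTheory.CategoryStruct.id j, Set.finite_range _⟩
  have : ∀ j, Nonempty (Φ.toEventualRanges.obj j) := Φ.toEventualRanges_nonempty hΦ
  have : ∀ j, Finite (Φ.toEventualRanges.obj j) := fun _ => Subtype.finite
  obtain ⟨s, hs⟩ := Φ.toEventualRanges.eval_section_surjective_of_surjective
    (Φ.surjective_toEventualRanges hΦ) (Opposite.op K)
    ⟨C, (G.infinite_iff_in_eventualRange C).mp hC⟩
  let s' := Φ.toEventualRangesSectionsEquiv s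
  exact ⟨⟨fun K => s'.1 (Opposite.op K), fun K L h => s'.2 (CategoryTheory.opHomOfLE h)⟩,
    congrArg Subtype.val hs⟩

end EndSpace

namespace OneEnded

variable {G : SimpleGraph V}

lemma infinite (hG : OneEnded G) : Infinite V := by
  obtain ⟨e, -⟩ := hG
  rw [← not_finite_iff_infinite]
  intro
  have := Fintype.ofFinite V
  obtain ⟨v, hv⟩ := (e.1 Finset.univ).nonempty
  exact (e.1 Finset.univ).notMem_of_mem hv (by simp)

variable [LocallyFinite G] [Fact G.Preconnected]

lemma eq_of_supp_infinite (hG : OneEnded G) {K : Finset V} {C C' : G.ComponentCompl (K : Set V)}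
    (hC : C.supp.Infinite) (hC' : C'.supp.Infinite) : C = C' := by
  have := hG.infinite
  obtain ⟨e, rfl⟩ := EndSpace.exists_apply_eq K C hC
  obtain ⟨e', rfl⟩ := EndSpace.exists_apply_eq K C' hC'
  obtain ⟨e₀, h₀⟩ := hG
  rw [h₀ e, h₀ e']

lemma exists_componentComplMk_eq (hG : OneEnded G) (K : Finset V) {X Y : Set V} (hX : X.Infinite)
    (hY : Y.Infinite) : ∃ x ∈ X, ∃ y ∈ Y, ∃ (hx : x ∉ (K : Set V)) (hy : y ∉ (K : Set V)),
      G.componentComplMk hx = G.componentComplMk hy := by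
  obtain ⟨x, hxX, hx, hCx⟩ := exists_mem_componentCompl_infinite (G := G) K hX
  obtain ⟨y, hyY, hy, hCy⟩ := exists_mem_componentCompl_infinite (G := G) K hY
  exact ⟨x, hxX, y, hyY, hx, hy, hG.eq_of_supp_infinite hCx hCy⟩

end OneEnded

namespace gluingSum

variable {G : SimpleGraph V} {F : SimpleGraph W} {D : Set V} {ψ : V → W}

variable (D ψ) in
noncomputable abbrev inl (v : V) : Quotient (glueSetoid D ψ) := ⟦Sum.inl v⟧

variable (D ψ) in
noncomputable abbrev inr (w : W) : Quotient (glueSetoid D ψ) := ⟦Sum.inr w⟧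

open Classical in
lemma mk_eq_mk_iff {x y : V ⊕ W} :
    (⟦x⟧ : Quotient (glueSetoid D ψ)) = ⟦y⟧ ↔
      Sum.elim (fun v => if v ∈ D then Sum.inr (ψ v) else Sum.inl v) Sum.inr x =
      Sum.elim (fun v => if v ∈ D then Sum.inr (ψ v) else (Sum.inl v : V ⊕ W)) Sum.inr y :=
  Quotient.eq

lemma inl_of_mem {v : V} (hv : v ∈ D) : inl D ψ v = inr D ψ (ψ v) :=
  mk_eq_mk_iff.mpr (by simp [hv])

lemma inr_injective : Function.Injective (inr D ψ) := fun _ _ h => by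
  simpa using mk_eq_mk_iff.mp h

lemma inl_injective (hψ : Set.InjOn ψ D) : Function.Injective (inl D ψ) := fun a b h => by
  have h := mk_eq_mk_iff.mp h
  by_cases ha : a ∈ D <;> by_cases hb : b ∈ D <;> simp [ha, hb] at h
  exacts [hψ ha hb h, h]

lemma eq_inl_of_mk_eq_inl {v : V} (hv : v ∉ D) {x : V ⊕ W} (h : ⟦x⟧ = inl D ψ v) :
    x = Sum.inl v := by
  have h := mk_eq_mk_iff.mp h
  rcases x with u | w
  · by_cases hu : u ∈ D <;> simp_all
  · simp_all

lemma mem_range_inl_of_notMem_range_inr {q : Quotient (glueSetoid D ψ)}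
    (hq : q ∉ Set.range (inr D ψ)) : q ∈ Set.range (inl D ψ) := by
  obtain ⟨v | w, rfl⟩ := Quotient.exists_rep q
  exacts [⟨v, rfl⟩, absurd ⟨w, rfl⟩ hq]

lemma notMem_of_inl_notMem_range_inr {v : V} (hv : inl D ψ v ∉ Set.range (inr D ψ)) : v ∉ D :=
  fun hvD => hv ⟨ψ v, (inl_of_mem hvD).symm⟩

variable (F) in
noncomputable def inlHom (hψ : Set.InjOn ψ D) : G →g gluingSum G F D ψ where
  toFun := inl D ψ
  map_rel' {v v'} h := (fromRel_adj _ _ _).mpr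
    ⟨fun hc => h.ne (inl_injective hψ hc), Or.inl ⟨_, _, rfl, rfl, Or.inl ⟨v, v', rfl, rfl, h⟩⟩⟩

variable (G) in
noncomputable def inrHom : F →g gluingSum G F D ψ where
  toFun := inr D ψ
  map_rel' {w w'} h := (fromRel_adj _ _ _).mpr
    ⟨fun hc => h.ne (inr_injective hc), Or.inl ⟨_, _, rfl, rfl, Or.inr ⟨w, w', rfl, rfl, h⟩⟩⟩

lemma exists_eq_inl_of_adj {v : V} (hv : v ∉ D) {q : Quotient (glueSetoid D ψ)}
    (h : (gluingSum G F D ψ).Adj (inl D ψ v) q) : ∃ u, q = inl D ψ u ∧ G.Adj v u := by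
  obtain ⟨-, ⟨x, y, hx, rfl, hxy⟩ | ⟨x, y, rfl, hy, hxy⟩⟩ := (fromRel_adj _ _ _).mp h
  · obtain rfl := eq_inl_of_mk_eq_inl hv hx.symm
    rcases hxy with ⟨a, b, ha, rfl, hab⟩ | ⟨a, b, ha, -, -⟩
    · cases ha
      exact ⟨b, rfl, hab⟩
    · cases ha
  · obtain rfl := eq_inl_of_mk_eq_inl hv hy.symm
    rcases hxy with ⟨a, b, rfl, hb, hab⟩ | ⟨a, b, -, hb, -⟩
    · cases hb
      exact ⟨a, rfl, hab.symm⟩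
    · cases hb

lemma exists_inl_mem_of_disjoint {N : Set (Quotient (glueSetoid D ψ))}
    {C : (gluingSum G F D ψ).ComponentCompl N} (hC : Disjoint (C : Set _) (Set.range (inr D ψ))) :
    ∃ v, inl D ψ v ∈ C := by
  obtain ⟨q, hq⟩ := C.nonempty
  obtain ⟨v, rfl⟩ := mem_range_inl_of_notMem_range_inr (Set.disjoint_left.mp hC hq)
  exact ⟨v, hq⟩

lemma notMem_of_inl_mem {N : Set (Quotient (glueSetoid D ψ))}
    {C : (gluingSum G F D ψ).ComponentCompl N} {L : Set V} (hLN : inl D ψ '' L ⊆ N) {v : V}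
    (hv : inl D ψ v ∈ C) : v ∉ L :=
  fun hvL => C.notMem_of_mem hv (hLN ⟨v, hvL, rfl⟩)

/-- A walk outside `N` that starts in a component of `gluingSum G F D ψ - N` containing no vertex
of `F` only uses edges of `G`. -/
lemma exists_reachable_of_walk {N : Set (Quotient (glueSetoid D ψ))}
    {C : (gluingSum G F D ψ).ComponentCompl N} (hC : Disjoint (C : Set _) (Set.range (inr D ψ)))
    {L : Set V} (hLN : inl D ψ '' L ⊆ N) {a b : ↥Nᶜ}
    (p : ((gluingSum G F D ψ).induce Nᶜ).Walk a b) (haC : (a : Quotient _) ∈ C) {v : V}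
    (hv : v ∉ L) (hav : (a : Quotient _) = inl D ψ v) :
    ∃ (u : V) (hu : u ∉ L), (b : Quotient _) = inl D ψ u ∧
      (G.induce Lᶜ).Reachable ⟨v, hv⟩ ⟨u, hu⟩ := by
  induction p generalizing v with
  | nil => exact ⟨v, hv, hav, .refl _⟩
  | @cons a c b hac p ih =>
    have hvD : v ∉ D := notMem_of_inl_notMem_range_inr (Set.disjoint_left.mp hC (hav ▸ haC))
    have hac' : (gluingSum G F D ψ).Adj (inl D ψ v) c := hav ▸ hac
    obtain ⟨y, hcy, hvy⟩ := exists_eq_inl_of_adj hvD hac'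
    have hcC : (c : Quotient _) ∈ C := C.mem_of_adj _ _ haC c.2 hac
    have hyL : y ∉ L := fun hyL => c.2 (by rw [hcy]; exact hLN ⟨y, hyL, rfl⟩)
    obtain ⟨u, hu, hbu, hyu⟩ := ih hcC hyL hcy
    exact ⟨u, hu, hbu, (show (G.induce Lᶜ).Adj ⟨v, hv⟩ ⟨y, hyL⟩ from hvy).reachable.trans hyu⟩

lemma componentComplMk_eq_of_disjoint (hψ : Set.InjOn ψ D) {N : Set (Quotient (glueSetoid D ψ))}
    {C : (gluingSum G F D ψ).ComponentCompl N} (hC : Disjoint (C : Set _) (Set.range (inr D ψ)))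
    {L : Set V} (hLN : inl D ψ '' L ⊆ N) {v u : V} (hv : inl D ψ v ∈ C) (hu : inl D ψ u ∈ C) :
    G.componentComplMk (notMem_of_inl_mem hLN hv) =
      G.componentComplMk (notMem_of_inl_mem hLN hu) := by
  obtain ⟨p⟩ := ConnectedComponent.exact (hv.2.trans hu.2.symm)
  obtain ⟨u', hu'L, hu', hvu'⟩ := exists_reachable_of_walk hC hLN p hv _ rfl
  obtain rfl := inl_injective hψ hu'
  exact ConnectedComponent.eq.mpr hvu'

section liftEnd

variable (e : EndSpace (gluingSum G F D ψ))

def EventuallyAvoidsRight : Prop :=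
  ∃ B : Finset (Quotient (glueSetoid D ψ)), Disjoint (e.1 B : Set _) (Set.range (inr D ψ))

variable {e}

lemma EventuallyAvoidsRight.exists_image_subset (he : EventuallyAvoidsRight e) (L : Finset V) :
    ∃ M : Finset (Quotient (glueSetoid D ψ)),
      Disjoint (e.1 M : Set _) (Set.range (inr D ψ)) ∧ inl D ψ '' L ⊆ M := by
  classical
  obtain ⟨B, hB⟩ := he
  refine ⟨B ∪ L.image (inl D ψ), hB.mono_left (e.supp_subset Finset.subset_union_left), ?_⟩
  simp

noncomputable def liftComponent (he : EventuallyAvoidsRight e) (L : Finset V) :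
    G.ComponentCompl (L : Set V) :=
  have hM := (he.exists_image_subset L).choose_spec
  G.componentComplMk (notMem_of_inl_mem hM.2 (exists_inl_mem_of_disjoint hM.1).choose_spec)

lemma componentComplMk_eq_of_mem_end (hψ : Set.InjOn ψ D) {L : Finset V}
    {M M' : Finset (Quotient (glueSetoid D ψ))}
    (hM : Disjoint (e.1 M : Set _) (Set.range (inr D ψ)))
    (hM' : Disjoint (e.1 M' : Set _) (Set.range (inr D ψ))) (hLM : inl D ψ '' L ⊆ M)
    (hLM' : inl D ψ '' L ⊆ M') {v v' : V} (hv : inl D ψ v ∈ e.1 M) (hv' : inl D ψ v' ∈ e.1 M') :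
    G.componentComplMk (notMem_of_inl_mem hLM hv) =
      G.componentComplMk (notMem_of_inl_mem hLM' hv') := by
  classical
  obtain ⟨u, hu⟩ := exists_inl_mem_of_disjoint
    (hM.mono_left (e.supp_subset (Finset.subset_union_left (s₂ := M'))))
  calc G.componentComplMk (notMem_of_inl_mem hLM hv)
      = G.componentComplMk (notMem_of_inl_mem hLM (e.supp_subset Finset.subset_union_left hu)) :=
        componentComplMk_eq_of_disjoint hψ hM hLM hv (e.supp_subset Finset.subset_union_left hu)
    _ = G.componentComplMk (notMem_of_inl_mem hLM' hv') :=
        componentComplMk_eq_of_disjoint hψ hM' hLM' (e.supp_subset Finset.subset_union_right hu) hv'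

lemma liftComponent_eq (hψ : Set.InjOn ψ D) (he : EventuallyAvoidsRight e) {L : Finset V}
    {M : Finset (Quotient (glueSetoid D ψ))} (hM : Disjoint (e.1 M : Set _) (Set.range (inr D ψ)))
    (hLM : inl D ψ '' L ⊆ M) {v : V} (hv : inl D ψ v ∈ e.1 M) :
    liftComponent he L = G.componentComplMk (notMem_of_inl_mem hLM hv) :=
  have hM₀ := (he.exists_image_subset L).choose_spec
  componentComplMk_eq_of_mem_end hψ hM₀.1 hM hM₀.2 hLM
    (exists_inl_mem_of_disjoint hM₀.1).choose_spec hv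

variable (e) in
noncomputable def liftEnd (hψ : Set.InjOn ψ D) (he : EventuallyAvoidsRight e) : EndSpace G :=
  ⟨liftComponent he, fun K L hKL => by
    obtain ⟨M, hM, hLM⟩ := he.exists_image_subset L
    obtain ⟨v, hv⟩ := exists_inl_mem_of_disjoint hM
    have hKM : inl D ψ '' K ⊆ M := (Set.image_mono (Finset.coe_subset.mpr hKL)).trans hLM
    rw [liftComponent_eq hψ he hM hLM hv, liftComponent_eq hψ he hM hKM hv]
    rfl⟩

lemma liftEnd_apply (hψ : Set.InjOn ψ D) (he : EventuallyAvoidsRight e) {L : Finset V}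
    {M : Finset (Quotient (glueSetoid D ψ))} (hM : Disjoint (e.1 M : Set _) (Set.range (inr D ψ)))
    (hLM : inl D ψ '' L ⊆ M) {v : V} (hv : inl D ψ v ∈ e.1 M) :
    (liftEnd e hψ he).1 L = G.componentComplMk (notMem_of_inl_mem hLM hv) :=
  liftComponent_eq hψ he hM hLM hv

lemma liftEnd_injective (hψ : Set.InjOn ψ D) {e' : EndSpace (gluingSum G F D ψ)}
    (he : EventuallyAvoidsRight e) (he' : EventuallyAvoidsRight e')
    (h : liftEnd e hψ he = liftEnd e' hψ he') : e = e' := by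
  classical
  obtain ⟨B, hB⟩ := id he
  obtain ⟨B', hB'⟩ := id he'
  refine EndSpace.ext_of_forall_superset (B ∪ B') fun N hBN => ?_
  have hN : Disjoint (e.1 N : Set _) (Set.range (inr D ψ)) :=
    hB.mono_left (e.supp_subset (Finset.subset_union_left.trans hBN))
  have hN' : Disjoint (e'.1 N : Set _) (Set.range (inr D ψ)) :=
    hB'.mono_left (e'.supp_subset (Finset.subset_union_right.trans hBN))
  let L := N.preimage (inl D ψ) (inl_injective hψ).injOn
  have hLN : inl D ψ '' L ⊆ N := by
    rw [Finset.coe_preimage]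
    exact Set.image_preimage_subset _ _
  obtain ⟨v, hv⟩ := exists_inl_mem_of_disjoint hN
  obtain ⟨v', hv'⟩ := exists_inl_mem_of_disjoint hN'
  have hG := (liftEnd_apply hψ he hN hLN hv).symm.trans
    ((congrArg (·.1 L) h).trans (liftEnd_apply hψ he' hN' hLN hv'))
  rw [← hv.2, ← hv'.2]
  exact (inlHom F hψ).componentComplMk_eq_componentComplMk (Finset.coe_preimage _ _).ge _ _ hG

lemma isFreeEnd_of_isFreeEnd_liftEnd (hψ : Set.InjOn ψ D) (he : EventuallyAvoidsRight e)
    (hfree : IsFreeEnd (liftEnd e hψ he)) : IsFreeEnd e := by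
  obtain ⟨K, hK⟩ := hfree
  obtain ⟨M, hM, hKM⟩ := he.exists_image_subset K
  refine ⟨M, fun e' he'M => ?_⟩
  have hM' : Disjoint (e'.1 M : Set _) (Set.range (inr D ψ)) := he'M ▸ hM
  obtain ⟨v, hv⟩ := exists_inl_mem_of_disjoint hM
  refine liftEnd_injective hψ ⟨M, hM'⟩ he (hK _ ?_)
  rw [liftEnd_apply hψ ⟨M, hM'⟩ hM' hKM (he'M ▸ hv), liftEnd_apply hψ he hM hKM hv]

/-- Vertices of `D` are glued to `F`, so they are missing from the components of `liftEnd e`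
beyond a set where `e` avoids `F`. -/
lemma liftEnd_notMem_endBoundary (hψ : Set.InjOn ψ D) (he : EventuallyAvoidsRight e) :
    liftEnd e hψ he ∉ endBoundary G D := by
  obtain ⟨B, hB⟩ := id he
  let L := B.preimage (inl D ψ) (inl_injective hψ).injOn
  have hLB : inl D ψ '' L ⊆ B := by
    rw [Finset.coe_preimage]
    exact Set.image_preimage_subset _ _
  obtain ⟨v, hv⟩ := exists_inl_mem_of_disjoint hB
  refine fun hmem => hmem L (Set.finite_empty.subset fun x ⟨hx, hxD⟩ => ?_)
  rw [liftEnd_apply hψ he hB hLB hv] at hx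
  have hH := (inlHom F hψ).componentComplMk_eq_componentComplMk (Finset.coe_preimage _ _).ge
    _ _ hx.2
  refine Set.disjoint_left.mp hB ?_ ⟨ψ x, (inl_of_mem hxD).symm⟩
  rw [← hv.2]
  exact ⟨_, hH⟩

lemma infinite_preimage_inr_of_not_isFreeEnd (hψ : Set.InjOn ψ D)
    (hlim : {e : EndSpace G | ¬ IsFreeEnd e} ⊆ endBoundary G D) (he : ¬ IsFreeEnd e)
    (K : Finset (Quotient (glueSetoid D ψ))) : (inr D ψ ⁻¹' e.1 K).Infinite := by
  classical
  intro hfin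
  let B := K ∪ hfin.toFinset.image (inr D ψ)
  have hB : Disjoint (e.1 B : Set _) (Set.range (inr D ψ)) := by
    refine Set.disjoint_left.mpr fun q hq ⟨w, hw⟩ => (e.1 B).notMem_of_mem hq ?_
    subst hw
    simp only [B, Finset.coe_union, Finset.coe_image, Set.Finite.coe_toFinset]
    exact Or.inr ⟨w, e.supp_subset Finset.subset_union_left hq, rfl⟩
  refine he (isFreeEnd_of_isFreeEnd_liftEnd hψ ⟨B, hB⟩ (not_not.mp fun hlift => ?_))
  exact liftEnd_notMem_endBoundary hψ ⟨B, hB⟩ (hlim hlift)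

end liftEnd

end gluingSum

theorem gluingSum_at_most_one_limit_end_general
    (G : SimpleGraph V) (F : SimpleGraph W)
    (hFlf : ∀ w, (F.neighborSet w).Finite)
    (hFc : F.Connected) (hF1 : OneEnded F)
    (D : Set V) (ψ : V → W) (hψ : Set.InjOn ψ D)
    (hlim : endBoundary G D = {e : EndSpace G | ¬ IsFreeEnd e}) :
    {e : EndSpace (gluingSum G F D ψ) | ¬ IsFreeEnd e}.Subsingleton := by
  have : LocallyFinite F := fun w => (hFlf w).fintype
  have : Fact F.Preconnected := ⟨hFc.preconnected⟩
  intro e₁ h₁ e₂ h₂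
  refine Subtype.ext (funext fun K => ?_)
  obtain ⟨w₁, hw₁, w₂, hw₂, hwK₁, hwK₂, hw⟩ := hF1.exists_componentComplMk_eq
    (K.preimage (gluingSum.inr D ψ) gluingSum.inr_injective.injOn)
    (gluingSum.infinite_preimage_inr_of_not_isFreeEnd hψ hlim.ge h₁ K)
    (gluingSum.infinite_preimage_inr_of_not_isFreeEnd hψ hlim.ge h₂ K)
  rw [← hw₁.2, ← hw₂.2]
  exact (gluingSum.inrHom G).componentComplMk_eq_componentComplMk
    (Finset.coe_preimage _ _).ge _ _ hw

/-- if the ends in the closure of `dom ψ` are exactly the non-free ends of `G`,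
then `G ⊕_ψ F` has at most one non-free end. -/
theorem gluingSum_at_most_one_limit_end
    (G : SimpleGraph V) (F : SimpleGraph W)
    (hGlf : ∀ v, (G.neighborSet v).Finite) (hFlf : ∀ w, (F.neighborSet w).Finite)
    (hGc : G.Connected) (hFc : F.Connected) (hF1 : OneEnded F)
    (D : Set V) (ψ : V → W) (hψ : Set.InjOn ψ D) (hD : D.Infinite)
    (hlim : endBoundary G D = {e : EndSpace G | ¬ IsFreeEnd e}) :
    {e : EndSpace (gluingSum G F D ψ) | ¬ IsFreeEnd e}.Subsingleton :=
  gluingSum_at_most_one_limit_end_general G F hFlf hFc hF1 D ψ hψ hlim
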